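/- Exact level-set characterization under compactness: suppose in addition that X is a topological space, U is a nonempty compact topological space, the map (x, u) ↦ f x u is jointly continuous, and l is continuous. Then for every K : ℕ, V_K x ≥ 0 implies there exists a control sequence u : ℕ → U with l (traj x u k) ≥ 0 for all k ≤ K; consequently the super-zero level set {x | V_K x ≥ 0} equals the K-step viable set. -/

import Mathlib

def traj {X U : Type*} (f : X → U → X) (x : X) (u : ℕ → U) : ℕ → X
  | 0 => x
  | k + 1 => f (traj f x u k) (u k)

noncomputable def safetyVal {X U : Type*} (f : X → U → X) (l : X → ℝ) : ℕ → X → ℝ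
  | 0, x => l x
  | K + 1, x => min (l x) (⨆ u : U, safetyVal f l K (f x u))

/-! The supremum over a compact set of controls is attained, so `0 ≤ V_{K+1} x` yields a single
control `u₀` with `0 ≤ l x` and `0 ≤ V_K (f x u₀)`; by induction on `K` these first controls chain
into a control sequence keeping the trajectory safe for `K` steps. The same compactness makes each
`V_K` continuous, which is what lets the induction go on. Conversely, a safe control sequence bounds
every supremum from below by its own first control. -/

section Compact

variable {α X U : Type*} [ConditionallyCompleteLinearOrder α] [TopologicalSpace α]
  [OrderTopology α] [TopologicalSpace X] [TopologicalSpace U] [CompactSpace U]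

theorem Continuous.exists_eq_ciSup [Nonempty U] {g : U → α} (hg : Continuous g) :
    ∃ u, g u = ⨆ u, g u := by
  obtain ⟨u₀, hu₀⟩ := hg.exists_forall_ge (by simp [Filter.cocompact_eq_bot])
  exact ⟨u₀, le_antisymm (le_ciSup (isCompact_range hg).bddAbove u₀) (ciSup_le hu₀)⟩

theorem continuous_ciSup_of_compactSpace {g : X → U → α} (hg : Continuous ↿g) :
    Continuous fun x => ⨆ u, g x u :=
  (isCompact_univ.continuous_sSup hg).congr fun x => by rw [Set.image_univ]; rfl

end Compact

section Trajectory

variable {X U : Type*} (f : X → U → X)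

theorem traj_succ_eq_traj_tail (x : X) (u : ℕ → U) (k : ℕ) :
    traj f x u (k + 1) = traj f (f x (u 0)) (fun n => u (n + 1)) k := by
  induction k with
  | zero => rfl
  | succ k ih => exact congrArg (f · (u (k + 1))) ih

theorem exists_forall_le_succ_traj_iff (p : X → Prop) (x : X) (K : ℕ) :
    (∃ u : ℕ → U, ∀ k ≤ K + 1, p (traj f x u k)) ↔
      p x ∧ ∃ u₀ : U, ∃ u : ℕ → U, ∀ k ≤ K, p (traj f (f x u₀) u k) := by
  constructor
  · rintro ⟨u, hu⟩
    refine ⟨hu 0 K.succ.zero_le, u 0, fun n => u (n + 1), fun k hk => ?_⟩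
    rw [← traj_succ_eq_traj_tail]
    exact hu (k + 1) (Nat.succ_le_succ hk)
  · rintro ⟨hx, u₀, u, hu⟩
    refine ⟨fun n => Nat.rec u₀ (fun m _ => u m) n, fun k hk => ?_⟩
    cases k with
    | zero => exact hx
    | succ k =>
      rw [traj_succ_eq_traj_tail]
      exact hu k (Nat.le_of_succ_le_succ hk)

end Trajectory

section SafetyValue

variable {X U : Type*} [TopologicalSpace X] [TopologicalSpace U] [CompactSpace U]
  {f : X → U → X} {l : X → ℝ}

theorem continuous_safetyVal (hf : Continuous fun p : X × U => f p.1 p.2) (hl : Continuous l)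
    (K : ℕ) : Continuous (safetyVal f l K) := by
  induction K with
  | zero => exact hl
  | succ K ih => exact hl.min (continuous_ciSup_of_compactSpace (ih.comp hf))

theorem zero_le_safetyVal_iff [Nonempty U] (hf : Continuous fun p : X × U => f p.1 p.2)
    (hl : Continuous l) (K : ℕ) (x : X) :
    0 ≤ safetyVal f l K x ↔ ∃ u : ℕ → U, ∀ k ≤ K, 0 ≤ l (traj f x u k) := by
  induction K generalizing x with
  | zero =>
    simp only [Nat.le_zero, forall_eq]
    exact ⟨fun hx => ⟨fun _ => Classical.arbitrary U, hx⟩, fun ⟨_, hx⟩ => hx⟩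
  | succ K ih =>
    have hcont : Continuous fun u => safetyVal f l K (f x u) :=
      (continuous_safetyVal hf hl K).comp (hf.comp (Continuous.prodMk_right x))
    obtain ⟨u₀, hu₀⟩ := hcont.exists_eq_ciSup
    have hsup : 0 ≤ ⨆ u, safetyVal f l K (f x u) ↔ ∃ u, 0 ≤ safetyVal f l K (f x u) :=
      ⟨fun h => ⟨u₀, hu₀ ▸ h⟩, fun ⟨u, hu⟩ =>
        hu.trans (le_ciSup (isCompact_range hcont).bddAbove u)⟩
    calc 0 ≤ safetyVal f l (K + 1) x ↔ 0 ≤ l x ∧ ∃ u₀, 0 ≤ safetyVal f l K (f x u₀) :=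
          le_min_iff.trans (and_congr_right' hsup)
      _ ↔ 0 ≤ l x ∧ ∃ u₀, ∃ u : ℕ → U, ∀ k ≤ K, 0 ≤ l (traj f (f x u₀) u k) := by
          simp only [ih]
      _ ↔ _ := (exists_forall_le_succ_traj_iff f (fun y => 0 ≤ l y) x K).symm

end SafetyValue

theorem safetyVal_level_set_eq_general {X U : Type*} [TopologicalSpace X] [TopologicalSpace U]
    [Nonempty U] [CompactSpace U]
    (f : X → U → X) (l : X → ℝ)
    (hf : Continuous fun p : X × U => f p.1 p.2) (hl : Continuous l) (K : ℕ) :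
    (∀ x : X, safetyVal f l K x ≥ 0 → ∃ u : ℕ → U, ∀ k ≤ K, l (traj f x u k) ≥ 0) ∧
    {x : X | safetyVal f l K x ≥ 0} = {x : X | ∃ u : ℕ → U, ∀ k ≤ K, l (traj f x u k) ≥ 0} :=
  ⟨fun x => (zero_le_safetyVal_iff hf hl K x).1,
    Set.ext fun x => zero_le_safetyVal_iff hf hl K x⟩

theorem safetyVal_level_set_eq {X U : Type*} [TopologicalSpace X] [TopologicalSpace U]
    [Nonempty U] [CompactSpace U]
    (f : X → U → X) (l : X → ℝ)
    (hf : Continuous fun p : X × U => f p.1 p.2) (hl : Continuous l)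
    (hbdd : ∃ M : ℝ, ∀ x : X, l x ≤ M) (K : ℕ) :
    (∀ x : X, safetyVal f l K x ≥ 0 → ∃ u : ℕ → U, ∀ k ≤ K, l (traj f x u k) ≥ 0) ∧
    {x : X | safetyVal f l K x ≥ 0} = {x : X | ∃ u : ℕ → U, ∀ k ≤ K, l (traj f x u k) ≥ 0} :=
  safetyVal_level_set_eq_general f l hf hl K
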